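/- Let X be a Lipschitz connected metric space with intrinsic metric d_IX. Then (X, d_IX) is analytic (there exist a complete separable metric space Z and a surjection f : Z → X that is continuous as a map into X equipped with d_IX) if and only if d_IX is separable (there is a countable set D ⊆ X such that for every x ∈ X and ε > 0 some y ∈ D satisfies d_IX(x,y) < ε) and the metric space (X, d_X) is analytic (there exist a complete separable metric space Z' and a continuous surjection g : Z' → X). -/

import Mathlib

/-- The metric segment `[x,z] = {y : d(x,y) + d(y,z) = d(x,z)}`. -/
def MetricSegment {X : Type*} [MetricSpace X] (x z : X) : Set X :=
  {y | dist x y + dist y z = dist x z}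

/-- A metric space is an ℝ-tree if every metric segment `[x,y]` is isometric to the
real interval `[0, d(x,y)]`, and `[x,y] ∩ [y,z] = {y}` implies `d(x,z) = d(x,y) + d(y,z)`. -/
def IsRTree (X : Type*) [MetricSpace X] : Prop :=
  (∀ x y : X, Nonempty ((MetricSegment x y) ≃ᵢ (Set.Icc (0:ℝ) (dist x y)))) ∧
  (∀ x y z : X, MetricSegment x y ∩ MetricSegment y z = {y} →
    dist x z = dist x y + dist y z)

/-- A metric space `X` is injective if every 1-Lipschitz map into `X` from a subset of a
metric space extends to a 1-Lipschitz map on the whole space. -/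
def IsInjectiveMetricSpace (X : Type*) [MetricSpace X] : Prop :=
  ∀ (A : Type) [MetricSpace A] (B : Set A) (f : B → X), LipschitzWith 1 f →
    ∃ g : A → X, LipschitzWith 1 g ∧ ∀ b : B, g b = f b

/-- A metric space is Lipschitz connected if any two points are joined by a Lipschitz
path `f : [0,1] → X`. -/
def LipschitzConnected (X : Type*) [MetricSpace X] : Prop :=
  ∀ x y : X, ∃ f : Set.Icc (0:ℝ) 1 → X, (∃ K : NNReal, LipschitzWith K f) ∧
    f ⟨0, by norm_num⟩ = x ∧ f ⟨1, by norm_num⟩ = y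

/-- The intrinsic metric: the infimum of Lipschitz constants of paths joining `x` and `y`. -/
noncomputable def intrinsicDist {X : Type*} [MetricSpace X] (x y : X) : ℝ :=
  sInf {K : ℝ | 0 ≤ K ∧ ∃ f : Set.Icc (0:ℝ) 1 → X,
    LipschitzWith K.toNNReal f ∧ f ⟨0, by norm_num⟩ = x ∧ f ⟨1, by norm_num⟩ = y}

/-- A metric space is analytic if it is a continuous image of a complete separable
metric space. -/
def IsAnalyticMetricSpace (X : Type*) [MetricSpace X] : Prop :=
  ∃ (Z : Type) (_ : MetricSpace Z) (_ : CompleteSpace Z)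
    (_ : TopologicalSpace.SeparableSpace Z) (g : Z → X),
      Continuous g ∧ Function.Surjective g

/-- `L`-Lipschitz connectedness: any two points `x,y` are joined by an `L`-Lipschitz
path defined on `[0, d(x,y)]`. -/
def LLipschitzConnected (L : NNReal) (Y : Type*) [MetricSpace Y] : Prop :=
  ∀ x y : Y, ∃ f : Set.Icc (0:ℝ) (dist x y) → Y, LipschitzWith L f ∧
    f ⟨0, ⟨le_refl 0, dist_nonneg⟩⟩ = x ∧ f ⟨dist x y, ⟨dist_nonneg, le_refl _⟩⟩ = y

/-- Hyperconvexity: every family of closed balls with `d(xᵢ,xⱼ) ≤ rᵢ + rⱼ` has a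
common point. -/
def Hyperconvex (X : Type*) [MetricSpace X] : Prop :=
  ∀ (I : Type) (x : I → X) (r : I → ℝ), (∀ i, 0 ≤ r i) →
    (∀ i j, dist (x i) (x j) ≤ r i + r j) →
    (⋂ i, Metric.closedBall (x i) (r i)).Nonempty

/-- Metric convexity. -/
def MetricallyConvex (X : Type*) [MetricSpace X] : Prop :=
  ∀ a b : X, ∀ t : ℝ, t ∈ Set.Icc (0:ℝ) 1 →
    ∃ x : X, dist a x = t * dist a b ∧ dist x b = (1 - t) * dist a b

/-- Binary intersection property: every family of pairwise intersecting closed balls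
has a common point. -/
def BinaryIntersectionProperty (X : Type*) [MetricSpace X] : Prop :=
  ∀ (I : Type) (x : I → X) (r : I → ℝ),
    (∀ i j, (Metric.closedBall (x i) (r i) ∩ Metric.closedBall (x j) (r j)).Nonempty) →
    (⋂ i, Metric.closedBall (x i) (r i)).Nonempty

/-! Since `d ≤ d_I`, a `d_I`-continuous surjection is `d`-continuous, and it maps a countable
dense set onto a `d_I`-dense one.

Conversely, let `e` be a `d_I`-dense sequence and `g : Z → X` a continuous surjection from a
complete separable space. Call `(p, z) ∈ ℕ^ℕ × Z` a code of `g z` if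
`d_I(e p_k, e p_{k+1}) ≤ 2^{-k}` and `d(e p_k, g z) ≤ 2^{-k}` for all `k`. The codes form a
closed subset of `ℕ^ℕ × Z`, and every point has one since `e` is `d_I`-dense. Reparametrising
near-optimal paths to speed one and running them one after another shows
`d_I(u 0, x) ≤ ∑ d_I(u k, u (k+1))` whenever `u → x` in `d`, although `X` need not be complete.
Hence `d_I(e p_k, g z) ≤ 2^{1-k}`, so codes agreeing at index `k` have images at `d_I`-distance
at most `2^{2-k}`, and `(p, z) ↦ g z` is `d_I`-continuous. -/

open Set Filter Topology
open Finset (range sum_range_succ)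

section Curves

variable {X : Type*} [PseudoMetricSpace X]

theorem LipschitzOnWith.congr {f g : ℝ → X} {K : NNReal} {s : Set ℝ}
    (hg : LipschitzOnWith K g s) (hfg : EqOn f g s) : LipschitzOnWith K f s :=
  LipschitzOnWith.of_dist_le_mul fun a ha b hb => by
    rw [hfg ha, hfg hb]
    exact hg.dist_le_mul a ha b hb

theorem LipschitzOnWith.comp_sub_const {f : ℝ → X} {K : NNReal} {a T : ℝ}
    (hf : LipschitzOnWith K f (Icc 0 T)) :
    LipschitzOnWith K (fun t => f (t - a)) (Icc a (a + T)) :=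
  LipschitzOnWith.of_dist_le_mul fun s hs t ht => by
    have hs' : s - a ∈ Icc 0 T := ⟨by linarith [hs.1], by linarith [hs.2]⟩
    have ht' : t - a ∈ Icc 0 T := ⟨by linarith [ht.1], by linarith [ht.2]⟩
    simpa only [dist_sub_right] using hf.dist_le_mul _ hs' _ ht'

theorem LipschitzOnWith.union_Icc_Icc {f : ℝ → X} {K : NNReal} {a b c : ℝ}
    (hab : LipschitzOnWith K f (Icc a b)) (hbc : LipschitzOnWith K f (Icc b c)) :
    LipschitzOnWith K f (Icc a b ∪ Icc b c) := by
  have across : ∀ s ∈ Icc a b, ∀ t ∈ Icc b c, dist (f s) (f t) ≤ K * dist s t := by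
    intro s hs t ht
    have hb₁ : b ∈ Icc a b := ⟨hs.1.trans hs.2, le_rfl⟩
    have hb₂ : b ∈ Icc b c := ⟨le_rfl, ht.1.trans ht.2⟩
    calc dist (f s) (f t) ≤ dist (f s) (f b) + dist (f b) (f t) := dist_triangle _ _ _
      _ ≤ K * dist s b + K * dist b t :=
        add_le_add (hab.dist_le_mul s hs b hb₁) (hbc.dist_le_mul b hb₂ t ht)
      _ = K * dist s t := by
        simp only [Real.dist_eq, abs_of_nonpos (sub_nonpos.2 hs.2),
          abs_of_nonpos (sub_nonpos.2 ht.1), abs_of_nonpos (sub_nonpos.2 (hs.2.trans ht.1))]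
        ring
  refine LipschitzOnWith.of_dist_le_mul fun s hs t ht => ?_
  rcases hs with hs | hs <;> rcases ht with ht | ht
  · exact hab.dist_le_mul s hs t ht
  · exact across s hs t ht
  · rw [dist_comm, dist_comm s]
    exact across t ht s hs
  · exact hbc.dist_le_mul s hs t ht

/-- `intrinsicDist x y` is the infimum of the `T ≥ 0` with `ReachableIn T x y`: rescale paths
from `[0, 1]` to `[0, T]`. -/
def ReachableIn (T : ℝ) (x y : X) : Prop :=
  ∃ γ : ℝ → X, LipschitzOnWith 1 γ (Icc 0 T) ∧ γ 0 = x ∧ γ T = y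

namespace ReachableIn

variable {S T : ℝ} {x y z : X}

theorem dist_le (hT : 0 ≤ T) (h : ReachableIn T x y) : dist x y ≤ T := by
  obtain ⟨γ, hγ, rfl, rfl⟩ := h
  simpa [abs_of_nonneg hT] using hγ.dist_le_mul 0 ⟨le_rfl, hT⟩ T ⟨hT, le_rfl⟩

theorem symm (h : ReachableIn T x y) : ReachableIn T y x := by
  obtain ⟨γ, hγ, rfl, rfl⟩ := h
  refine ⟨fun t => γ (T - t), LipschitzOnWith.of_dist_le_mul fun s hs t ht => ?_,
    by simp, by simp⟩
  have hs' : T - s ∈ Icc 0 T := ⟨by linarith [hs.2], by linarith [hs.1]⟩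
  have ht' : T - t ∈ Icc 0 T := ⟨by linarith [ht.2], by linarith [ht.1]⟩
  simpa only [dist_sub_left] using hγ.dist_le_mul _ hs' _ ht'

theorem trans (hS : 0 ≤ S) (hT : 0 ≤ T) (hxy : ReachableIn S x y) (hyz : ReachableIn T y z) :
    ReachableIn (S + T) x z := by
  obtain ⟨γ, hγ, rfl, rfl⟩ := hxy
  obtain ⟨δ, hδ, hδγ, rfl⟩ := hyz
  set c : ℝ → X := fun t => if t ≤ S then γ t else δ (t - S)
  have hcγ : EqOn c γ (Icc 0 S) := fun t ht => if_pos ht.2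
  have hcδ : EqOn c (fun t => δ (t - S)) (Icc S (S + T)) := fun t ht => by
    rcases ht.1.eq_or_lt with rfl | hSt
    · simp [c, hδγ]
    · exact if_neg hSt.not_ge
  refine ⟨c, ?_, hcγ ⟨le_rfl, hS⟩, by simpa using hcδ ⟨le_add_of_nonneg_right hT, le_rfl⟩⟩
  rw [← Icc_union_Icc_eq_Icc hS (le_add_of_nonneg_right hT)]
  exact (hγ.congr hcγ).union_Icc_Icc (hδ.comp_sub_const.congr hcδ)

end ReachableIn
end Curves

section Concat

variable {X : Type*} {T : ℕ → ℝ} {γ : ℕ → ℝ → X} {x : X}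

noncomputable def pieceIndex (T : ℕ → ℝ) (t : ℝ) : ℕ :=
  sInf {k | t < ∑ i ∈ range (k + 1), T i}

theorem pieceIndex_eq (hT : ∀ k, 0 ≤ T k) {k : ℕ} {t : ℝ} (h₁ : ∑ i ∈ range k, T i ≤ t)
    (h₂ : t < ∑ i ∈ range (k + 1), T i) : pieceIndex T t = k := by
  refine le_antisymm (Nat.sInf_le h₂) (not_lt.1 fun hlt => ?_)
  have hmem : t < ∑ i ∈ range (pieceIndex T t + 1), T i :=
    Nat.sInf_mem (s := {k | t < ∑ i ∈ range (k + 1), T i}) ⟨k, h₂⟩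
  have hmono : ∑ i ∈ range (pieceIndex T t + 1), T i ≤ ∑ i ∈ range k, T i :=
    Finset.sum_le_sum_of_subset_of_nonneg (Finset.range_subset_range.2 hlt) fun i _ _ => hT i
  linarith

noncomputable def concatCurves (T : ℕ → ℝ) (γ : ℕ → ℝ → X) (x : X) (t : ℝ) : X :=
  if t < ∑' k, T k then γ (pieceIndex T t) (t - ∑ i ∈ range (pieceIndex T t), T i) else x

theorem sum_range_lt_tsum_of_pos (hT : ∀ k, 0 < T k) (hsum : Summable T) (n : ℕ) :
    ∑ i ∈ range n, T i < ∑' k, T k := by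
  have := hsum.sum_le_tsum (range (n + 1)) fun i _ => (hT i).le
  rw [sum_range_succ] at this
  linarith [hT n]

theorem concatCurves_eqOn (hT : ∀ k, 0 < T k) (hsum : Summable T)
    (hmatch : ∀ k, γ k (T k) = γ (k + 1) 0) (n : ℕ) :
    EqOn (concatCurves T γ x) (fun t => γ n (t - ∑ i ∈ range n, T i))
      (Icc (∑ i ∈ range n, T i) (∑ i ∈ range n, T i + T n)) := by
  intro t ht
  have hT' : ∀ k, 0 ≤ T k := fun k => (hT k).le
  rcases ht.2.lt_or_eq with hlt | rfl
  · rw [← sum_range_succ] at hlt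
    simp only [concatCurves, if_pos (hlt.trans (sum_range_lt_tsum_of_pos hT hsum _)),
      pieceIndex_eq hT' ht.1 hlt]
  · have hnext : ∑ i ∈ range (n + 1), T i < ∑ i ∈ range (n + 1 + 1), T i := by
      rw [sum_range_succ _ (n + 1)]
      linarith [hT (n + 1)]
    rw [← sum_range_succ T n]
    simp only [concatCurves]
    rw [if_pos (sum_range_lt_tsum_of_pos hT hsum _), pieceIndex_eq hT' le_rfl hnext, sub_self,
      sum_range_succ, add_sub_cancel_left, hmatch]

theorem concatCurves_apply_sum_range (hT : ∀ k, 0 < T k) (hsum : Summable T)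
    (hmatch : ∀ k, γ k (T k) = γ (k + 1) 0) (n : ℕ) :
    concatCurves T γ x (∑ i ∈ range n, T i) = γ n 0 := by
  simpa using concatCurves_eqOn (x := x) hT hsum hmatch n ⟨le_rfl, by linarith [hT n]⟩

variable [PseudoMetricSpace X]

theorem concatCurves_lipschitzOnWith_Icc_sum_range (hT : ∀ k, 0 < T k) (hsum : Summable T)
    (hγ : ∀ k, LipschitzOnWith 1 (γ k) (Icc 0 (T k))) (hmatch : ∀ k, γ k (T k) = γ (k + 1) 0)
    (n : ℕ) : LipschitzOnWith 1 (concatCurves T γ x) (Icc 0 (∑ i ∈ range n, T i)) := by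
  induction n with
  | zero =>
    simp only [Finset.range_zero, Finset.sum_empty, Icc_self]
    exact LipschitzOnWith.of_dist_le_mul fun s hs t ht => by
      simp [mem_singleton_iff.1 hs, mem_singleton_iff.1 ht]
  | succ n ih =>
    have hsn : 0 ≤ ∑ i ∈ range n, T i := Finset.sum_nonneg fun i _ => (hT i).le
    rw [sum_range_succ, ← Icc_union_Icc_eq_Icc hsn (by linarith [hT n])]
    exact ih.union_Icc_Icc ((hγ n).comp_sub_const.congr (concatCurves_eqOn hT hsum hmatch n))

theorem concatCurves_lipschitzOnWith_Ico (hT : ∀ k, 0 < T k) (hsum : Summable T)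
    (hγ : ∀ k, LipschitzOnWith 1 (γ k) (Icc 0 (T k))) (hmatch : ∀ k, γ k (T k) = γ (k + 1) 0) :
    LipschitzOnWith 1 (concatCurves T γ x) (Ico 0 (∑' k, T k)) := by
  refine LipschitzOnWith.of_dist_le_mul fun s hs t ht => ?_
  obtain ⟨n, hn⟩ :=
    (hsum.hasSum.tendsto_sum_nat.eventually (eventually_gt_nhds (max_lt hs.2 ht.2))).exists
  exact (concatCurves_lipschitzOnWith_Icc_sum_range hT hsum hγ hmatch n).dist_le_mul
    s ⟨hs.1, (le_max_left _ _).trans hn.le⟩ t ⟨ht.1, (le_max_right _ _).trans hn.le⟩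

theorem dist_concatCurves_le (hT : ∀ k, 0 < T k) (hsum : Summable T)
    (hγ : ∀ k, LipschitzOnWith 1 (γ k) (Icc 0 (T k))) (hmatch : ∀ k, γ k (T k) = γ (k + 1) 0)
    (hlim : Tendsto (fun k => γ k 0) atTop (𝓝 x)) {t : ℝ} (ht : t ∈ Ico 0 (∑' k, T k)) :
    dist (concatCurves T γ x t) x ≤ ∑' k, T k - t := by
  have hsums := hsum.hasSum.tendsto_sum_nat
  refine le_of_tendsto_of_tendsto (tendsto_const_nhds.dist hlim) (hsums.sub_const t) ?_
  filter_upwards [hsums.eventually (eventually_gt_nhds ht.2)] with n hn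
  rw [← concatCurves_apply_sum_range hT hsum hmatch n]
  have := (concatCurves_lipschitzOnWith_Ico (x := x) hT hsum hγ hmatch).dist_le_mul t ht _
    ⟨Finset.sum_nonneg fun i _ => (hT i).le, sum_range_lt_tsum_of_pos hT hsum n⟩
  rwa [NNReal.coe_one, one_mul, Real.dist_eq, abs_of_neg (sub_neg.2 hn), neg_sub] at this

theorem concatCurves_lipschitzOnWith (hT : ∀ k, 0 < T k) (hsum : Summable T)
    (hγ : ∀ k, LipschitzOnWith 1 (γ k) (Icc 0 (T k))) (hmatch : ∀ k, γ k (T k) = γ (k + 1) 0)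
    (hlim : Tendsto (fun k => γ k 0) atTop (𝓝 x)) :
    LipschitzOnWith 1 (concatCurves T γ x) (Icc 0 (∑' k, T k)) := by
  have hend : concatCurves T γ x (∑' k, T k) = x := by simp [concatCurves]
  have to_end : ∀ t ∈ Ico 0 (∑' k, T k),
      dist (concatCurves T γ x t) (concatCurves T γ x (∑' k, T k)) ≤ dist t (∑' k, T k) := by
    intro t ht
    rw [hend, Real.dist_eq, abs_of_neg (sub_neg.2 ht.2), neg_sub]
    exact dist_concatCurves_le hT hsum hγ hmatch hlim ht
  refine LipschitzOnWith.of_dist_le_mul fun s hs t ht => ?_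
  rw [NNReal.coe_one, one_mul]
  rcases hs.2.lt_or_eq with hs' | rfl <;> rcases ht.2.lt_or_eq with ht' | rfl
  · simpa using (concatCurves_lipschitzOnWith_Ico hT hsum hγ hmatch).dist_le_mul
      s ⟨hs.1, hs'⟩ t ⟨ht.1, ht'⟩
  · exact to_end s ⟨hs.1, hs'⟩
  · rw [dist_comm, dist_comm (∑' k, T k)]
    exact to_end t ⟨ht.1, ht'⟩
  · simp

theorem ReachableIn.of_tendsto {u : ℕ → X} (hT : ∀ k, 0 < T k) (hsum : Summable T)
    (hu : ∀ k, ReachableIn (T k) (u k) (u (k + 1))) (hlim : Tendsto u atTop (𝓝 x)) :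
    ReachableIn (∑' k, T k) (u 0) x := by
  choose γ hγ hγ₀ hγ₁ using hu
  have hmatch : ∀ k, γ k (T k) = γ (k + 1) 0 := fun k => (hγ₁ k).trans (hγ₀ (k + 1)).symm
  have hlim' : Tendsto (fun k => γ k 0) atTop (𝓝 x) := hlim.congr fun k => (hγ₀ k).symm
  refine ⟨concatCurves T γ x, concatCurves_lipschitzOnWith hT hsum hγ hmatch hlim', ?_,
    by simp [concatCurves]⟩
  simpa [hγ₀] using concatCurves_apply_sum_range (x := x) hT hsum hmatch 0

end Concat

section Intrinsic

variable {X : Type*} [MetricSpace X] {x y : X}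

theorem intrinsicDist_nonneg (x y : X) : 0 ≤ intrinsicDist x y :=
  Real.sInf_nonneg fun _ hK => hK.1

theorem intrinsicDist_le_of_reachableIn {T : ℝ} (hT : 0 ≤ T) (h : ReachableIn T x y) :
    intrinsicDist x y ≤ T := by
  obtain ⟨γ, hγ, rfl, rfl⟩ := h
  refine csInf_le ⟨0, fun _ hK => hK.1⟩ ⟨hT, fun t => γ (T * t), ?_, by simp, by simp⟩
  refine LipschitzWith.of_dist_le_mul fun a b => ?_
  have hmem : ∀ t : Icc (0 : ℝ) 1, T * t ∈ Icc 0 T := fun t =>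
    ⟨mul_nonneg hT t.2.1, mul_le_of_le_one_right hT t.2.2⟩
  calc dist (γ (T * a)) (γ (T * b)) ≤ 1 * dist (T * (a : ℝ)) (T * b) :=
        hγ.dist_le_mul _ (hmem a) _ (hmem b)
    _ = T.toNNReal * dist a b := by
        rw [Real.coe_toNNReal _ hT, one_mul, Subtype.dist_eq, Real.dist_eq, Real.dist_eq,
          ← mul_sub, abs_mul, abs_of_nonneg hT]

theorem reachableIn_of_intrinsicDist_lt (h : LipschitzConnected X) {T : ℝ}
    (hT : intrinsicDist x y < T) : ReachableIn T x y := by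
  have hne : {K : ℝ | 0 ≤ K ∧ ∃ f : Icc (0 : ℝ) 1 → X,
      LipschitzWith K.toNNReal f ∧ f ⟨0, by norm_num⟩ = x ∧ f ⟨1, by norm_num⟩ = y}.Nonempty := by
    obtain ⟨f, ⟨K, hK⟩, hf₀, hf₁⟩ := h x y
    exact ⟨K, K.coe_nonneg, f, by simpa using hK, hf₀, hf₁⟩
  obtain ⟨K, ⟨hK, f, hf, rfl, rfl⟩, hKT⟩ := exists_lt_of_csInf_lt hne hT
  have hTpos : 0 < T := hK.trans_lt hKT
  refine ⟨fun t => IccExtend zero_le_one f (t / T), LipschitzOnWith.of_dist_le_mul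
    fun s _ t _ => ?_, by simp, by simp [hTpos.ne']⟩
  calc dist (IccExtend zero_le_one f (s / T)) (IccExtend zero_le_one f (t / T))
      ≤ K * dist (s / T) (t / T) := by
        have := (hf.comp (LipschitzWith.projIcc zero_le_one)).dist_le_mul (s / T) (t / T)
        rwa [mul_one, Real.coe_toNNReal _ hK] at this
    _ ≤ T * dist (s / T) (t / T) := by gcongr
    _ = (1 : NNReal) * dist s t := by
        rw [Real.dist_eq, Real.dist_eq, ← sub_div, abs_div, abs_of_pos hTpos,
          mul_div_cancel₀ _ hTpos.ne', NNReal.coe_one, one_mul]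

theorem dist_le_intrinsicDist (h : LipschitzConnected X) (x y : X) :
    dist x y ≤ intrinsicDist x y :=
  le_of_forall_gt_imp_ge_of_dense fun _ hT =>
    (reachableIn_of_intrinsicDist_lt h hT).dist_le ((intrinsicDist_nonneg x y).trans hT.le)

theorem intrinsicDist_comm (h : LipschitzConnected X) (x y : X) :
    intrinsicDist x y = intrinsicDist y x := by
  have key : ∀ x y : X, intrinsicDist y x ≤ intrinsicDist x y := fun x y =>
    le_of_forall_gt_imp_ge_of_dense fun _ hT => intrinsicDist_le_of_reachableIn
      ((intrinsicDist_nonneg x y).trans hT.le) (reachableIn_of_intrinsicDist_lt h hT).symm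
  exact le_antisymm (key y x) (key x y)

theorem intrinsicDist_triangle (h : LipschitzConnected X) (x y z : X) :
    intrinsicDist x z ≤ intrinsicDist x y + intrinsicDist y z := by
  refine le_of_forall_pos_le_add fun ε hε => ?_
  have hxy := reachableIn_of_intrinsicDist_lt h (lt_add_of_pos_right _ (half_pos hε) :
    intrinsicDist x y < intrinsicDist x y + ε / 2)
  have hyz := reachableIn_of_intrinsicDist_lt h (lt_add_of_pos_right _ (half_pos hε) :
    intrinsicDist y z < intrinsicDist y z + ε / 2)
  have hpos : ∀ a b : X, 0 ≤ intrinsicDist a b + ε / 2 := fun a b =>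
    add_nonneg (intrinsicDist_nonneg a b) (half_pos hε).le
  calc intrinsicDist x z ≤ intrinsicDist x y + ε / 2 + (intrinsicDist y z + ε / 2) :=
        intrinsicDist_le_of_reachableIn (add_nonneg (hpos x y) (hpos y z))
          (hxy.trans (hpos x y) (hpos y z) hyz)
    _ = intrinsicDist x y + intrinsicDist y z + ε := by ring

theorem intrinsicDist_le_tsum_of_tendsto (h : LipschitzConnected X) {u : ℕ → X} {a : ℕ → ℝ}
    (ha : ∀ k, intrinsicDist (u k) (u (k + 1)) ≤ a k) (hsum : Summable a)
    (hlim : Tendsto u atTop (𝓝 x)) : intrinsicDist (u 0) x ≤ ∑' k, a k := by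
  refine le_of_forall_pos_le_add fun η hη => ?_
  set ε : ℕ → ℝ := fun k => η / 2 / 2 ^ k
  have hε : ∀ k, 0 < ε k := fun k => by positivity
  have hpos : ∀ k, 0 < a k + ε k := fun k =>
    add_pos_of_nonneg_of_pos ((intrinsicDist_nonneg _ _).trans (ha k)) (hε k)
  have hreach : ∀ k, ReachableIn (a k + ε k) (u k) (u (k + 1)) := fun k =>
    reachableIn_of_intrinsicDist_lt h ((ha k).trans_lt (lt_add_of_pos_right _ (hε k)))
  calc intrinsicDist (u 0) x ≤ ∑' k, (a k + ε k) :=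
        intrinsicDist_le_of_reachableIn (tsum_nonneg fun k => (hpos k).le)
          (.of_tendsto hpos (hsum.add (summable_geometric_two' η)) hreach hlim)
    _ = ∑' k, a k + η := by
        rw [hsum.tsum_add (summable_geometric_two' η), tsum_geometric_two']

theorem intrinsicDist_le_of_tendsto_of_le_geometric (h : LipschitzConnected X) {u : ℕ → X}
    (hu : ∀ k, intrinsicDist (u k) (u (k + 1)) ≤ (1 / 2) ^ k) (hlim : Tendsto u atTop (𝓝 x))
    (n : ℕ) : intrinsicDist (u n) x ≤ 2 * (1 / 2) ^ n := by
  have htail := intrinsicDist_le_tsum_of_tendsto h (u := fun k => u (k + n))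
    (a := fun k => (1 / 2) ^ n * (1 / 2) ^ k) (fun k => by
      simpa [pow_add, mul_comm, add_right_comm k 1 n] using hu (k + n))
    ((summable_geometric_two).mul_left _) (hlim.comp (tendsto_add_atTop_nat n))
  rw [tsum_mul_left, tsum_geometric_two, zero_add, mul_comm] at htail
  exact htail

end Intrinsic

def IsIntrinsicallySeparable (X : Type*) [MetricSpace X] : Prop :=
  ∃ D : Set X, D.Countable ∧ ∀ x : X, ∀ ε : ℝ, 0 < ε → ∃ y ∈ D, intrinsicDist x y < ε

def IsIntrinsicallyAnalytic (X : Type*) [MetricSpace X] : Prop :=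
  ∃ (Z : Type) (_ : MetricSpace Z) (_ : CompleteSpace Z)
    (_ : TopologicalSpace.SeparableSpace Z) (f : Z → X),
      Function.Surjective f ∧
      ∀ z : Z, ∀ ε : ℝ, 0 < ε → ∃ δ : ℝ, 0 < δ ∧
        ∀ z' : Z, dist z z' < δ → intrinsicDist (f z) (f z') < ε

section Codes

variable {X Z : Type*} [MetricSpace X] (e : ℕ → X) (g : Z → X)

def fastCodes : Set ((ℕ → ℕ) × Z) :=
  {c | ∀ k, intrinsicDist (e (c.1 k)) (e (c.1 (k + 1))) ≤ (1 / 2) ^ k ∧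
    dist (e (c.1 k)) (g c.2) ≤ (1 / 2) ^ k}

variable {e g}

theorem isClosed_fastCodes [TopologicalSpace Z] (hg : Continuous g) : IsClosed (fastCodes e g) := by
  have hcoord : ∀ k, Continuous fun c : (ℕ → ℕ) × Z => c.1 k := fun k =>
    (continuous_apply k).comp continuous_fst
  simp only [fastCodes, ofPred_forall, ofPred_and]
  refine isClosed_iInter fun k => (isClosed_le ?_ continuous_const).inter
    (isClosed_le ?_ continuous_const)
  · exact (continuous_of_discreteTopology
      (f := fun m : ℕ × ℕ => intrinsicDist (e m.1) (e m.2))).comp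
        ((hcoord k).prodMk (hcoord (k + 1)))
  · exact ((continuous_of_discreteTopology (f := e)).comp (hcoord k)).dist (hg.comp continuous_snd)

theorem intrinsicDist_le_of_mem_fastCodes (h : LipschitzConnected X) {c : (ℕ → ℕ) × Z}
    (hc : c ∈ fastCodes e g) (k : ℕ) : intrinsicDist (e (c.1 k)) (g c.2) ≤ 2 * (1 / 2) ^ k := by
  have hlim : Tendsto (fun k => e (c.1 k)) atTop (𝓝 (g c.2)) :=
    tendsto_iff_dist_tendsto_zero.2 <| squeeze_zero (fun _ => dist_nonneg) (fun k => (hc k).2)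
      (tendsto_pow_atTop_nhds_zero_of_lt_one (by norm_num) (by norm_num))
  exact intrinsicDist_le_of_tendsto_of_le_geometric h (fun k => (hc k).1) hlim k

theorem intrinsicDist_le_of_mem_fastCodes_of_eq (h : LipschitzConnected X) {c c' : (ℕ → ℕ) × Z}
    (hc : c ∈ fastCodes e g) (hc' : c' ∈ fastCodes e g) {k : ℕ} (hk : c.1 k = c'.1 k) :
    intrinsicDist (g c.2) (g c'.2) ≤ 4 * (1 / 2) ^ k := by
  calc intrinsicDist (g c.2) (g c'.2)
      ≤ intrinsicDist (g c.2) (e (c.1 k)) + intrinsicDist (e (c'.1 k)) (g c'.2) := by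
        rw [← hk]
        exact intrinsicDist_triangle h _ _ _
    _ ≤ 2 * (1 / 2) ^ k + 2 * (1 / 2) ^ k := by
        rw [intrinsicDist_comm h]
        exact add_le_add (intrinsicDist_le_of_mem_fastCodes h hc k)
          (intrinsicDist_le_of_mem_fastCodes h hc' k)
    _ = 4 * (1 / 2) ^ k := by ring

theorem exists_mem_fastCodes (h : LipschitzConnected X)
    (he : ∀ x : X, ∀ ε : ℝ, 0 < ε → ∃ n, intrinsicDist x (e n) < ε) (z : Z) :
    ∃ p : ℕ → ℕ, (p, z) ∈ fastCodes e g := by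
  choose p hp using fun k : ℕ => he (g z) ((1 / 2) ^ (k + 1)) (by positivity)
  refine ⟨p, fun k => ⟨?_, ?_⟩⟩
  · calc intrinsicDist (e (p k)) (e (p (k + 1)))
        ≤ intrinsicDist (g z) (e (p k)) + intrinsicDist (g z) (e (p (k + 1))) := by
          rw [intrinsicDist_comm h (g z) (e (p k))]
          exact intrinsicDist_triangle h _ _ _
      _ ≤ (1 / 2) ^ (k + 1) + (1 / 2) ^ (k + 1 + 1) := add_le_add (hp k).le (hp (k + 1)).le
      _ = 3 / 4 * (1 / 2) ^ k := by ring
      _ ≤ (1 / 2) ^ k := by linarith [pow_pos (by norm_num : (0 : ℝ) < 1 / 2) k]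
  · calc dist (e (p k)) (g z) = dist (g z) (e (p k)) := dist_comm _ _
      _ ≤ intrinsicDist (g z) (e (p k)) := dist_le_intrinsicDist h _ _
      _ ≤ (1 / 2) ^ k := (hp k).le.trans (pow_le_pow_of_le_one (by norm_num) (by norm_num)
          k.le_succ)

end Codes

section Analytic

variable {X : Type*} [MetricSpace X]

theorem isIntrinsicallyAnalytic_of_seq (h : LipschitzConnected X) (e : ℕ → X)
    (he : ∀ x : X, ∀ ε : ℝ, 0 < ε → ∃ n, intrinsicDist x (e n) < ε) {Z : Type} [MetricSpace Z]
    [CompleteSpace Z] [TopologicalSpace.SeparableSpace Z] {g : Z → X} (hg : Continuous g)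
    (hgs : Function.Surjective g) :
    IsIntrinsicallyAnalytic X := by
  -- this metric carries the product uniformity by definition, so `isClosed_fastCodes` applies
  let _ : MetricSpace (ℕ → ℕ) := PiNat.metricSpaceNatNat
  have : CompleteSpace (fastCodes e g) := (isClosed_fastCodes hg).completeSpace_coe
  refine ⟨fastCodes e g, inferInstance, inferInstance, inferInstance, fun c => g c.1.2,
    fun x => ?_, fun c ε hε => ?_⟩
  · obtain ⟨z, rfl⟩ := hgs x
    obtain ⟨p, hp⟩ := exists_mem_fastCodes h he z
    exact ⟨⟨(p, z), hp⟩, rfl⟩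
  · obtain ⟨k, hk⟩ := exists_pow_lt_of_lt_one (by positivity : 0 < ε / 4)
      (by norm_num : (1 / 2 : ℝ) < 1)
    refine ⟨(1 / 2) ^ k, by positivity, fun c' hcc' => ?_⟩
    have hfst : dist c.1.1 c'.1.1 < (1 / 2) ^ k := by
      rw [Subtype.dist_eq, Prod.dist_eq] at hcc'
      exact (le_max_left _ _).trans_lt hcc'
    refine (intrinsicDist_le_of_mem_fastCodes_of_eq h c.2 c'.2
      (PiNat.apply_eq_of_dist_lt hfst le_rfl)).trans_lt ?_
    linarith

theorem IsIntrinsicallyAnalytic.isIntrinsicallySeparable (hX : IsIntrinsicallyAnalytic X) :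
    IsIntrinsicallySeparable X := by
  obtain ⟨Z, _, _, _, f, hsurj, hcont⟩ := hX
  obtain ⟨s, hs, hsd⟩ := TopologicalSpace.exists_countable_dense Z
  refine ⟨f '' s, hs.image f, fun x ε hε => ?_⟩
  obtain ⟨z, rfl⟩ := hsurj x
  obtain ⟨δ, hδ, hzδ⟩ := hcont z ε hε
  obtain ⟨z', hz's, hz'⟩ := hsd.exists_dist_lt z hδ
  exact ⟨f z', mem_image_of_mem f hz's, hzδ z' hz'⟩

theorem IsIntrinsicallyAnalytic.isAnalyticMetricSpace (h : LipschitzConnected X)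
    (hX : IsIntrinsicallyAnalytic X) : IsAnalyticMetricSpace X := by
  obtain ⟨Z, _, _, _, f, hsurj, hcont⟩ := hX
  refine ⟨Z, ‹_›, ‹_›, ‹_›, f, Metric.continuous_iff.2 fun z ε hε => ?_, hsurj⟩
  obtain ⟨δ, hδ, hzδ⟩ := hcont z ε hε
  refine ⟨δ, hδ, fun z' hz' => ?_⟩
  rw [dist_comm] at hz' ⊢
  exact (dist_le_intrinsicDist h _ _).trans_lt (hzδ z' hz')

theorem IsIntrinsicallySeparable.isIntrinsicallyAnalytic (h : LipschitzConnected X)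
    (hD : IsIntrinsicallySeparable X) (hA : IsAnalyticMetricSpace X) :
    IsIntrinsicallyAnalytic X := by
  obtain ⟨Z, _, _, _, g, hg, hgs⟩ := hA
  rcases isEmpty_or_nonempty X with hX | ⟨⟨x₀⟩⟩
  · exact ⟨Z, ‹_›, ‹_›, ‹_›, g, hgs, fun z => isEmptyElim (g z)⟩
  obtain ⟨D, hDc, hDd⟩ := hD
  obtain ⟨e, rfl⟩ := hDc.exists_eq_range <| let ⟨y, hy, _⟩ := hDd x₀ 1 one_pos; ⟨y, hy⟩
  refine isIntrinsicallyAnalytic_of_seq h e (fun x ε hε => ?_) hg hgs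
  obtain ⟨_, ⟨n, rfl⟩, hn⟩ := hDd x ε hε
  exact ⟨n, hn⟩

end Analytic

/-- For a Lipschitz connected metric space `X`, the intrinsic metric is analytic iff it
is separable and the metric `d_X` is analytic. -/
theorem intrinsic_analytic_iff (X : Type) [MetricSpace X] (h : LipschitzConnected X) :
    (∃ (Z : Type) (_ : MetricSpace Z) (_ : CompleteSpace Z)
      (_ : TopologicalSpace.SeparableSpace Z) (f : Z → X),
        Function.Surjective f ∧
        ∀ z : Z, ∀ ε : ℝ, 0 < ε → ∃ δ : ℝ, 0 < δ ∧
          ∀ z' : Z, dist z z' < δ → intrinsicDist (f z) (f z') < ε)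
    ↔ ((∃ D : Set X, D.Countable ∧
          ∀ x : X, ∀ ε : ℝ, 0 < ε → ∃ y ∈ D, intrinsicDist x y < ε) ∧
        IsAnalyticMetricSpace X) :=
  ⟨fun hX => ⟨IsIntrinsicallyAnalytic.isIntrinsicallySeparable hX,
      IsIntrinsicallyAnalytic.isAnalyticMetricSpace h hX⟩,
    fun ⟨hD, hA⟩ => IsIntrinsicallySeparable.isIntrinsicallyAnalytic h hD hA⟩
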